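/- arXiv:1412.5888 — 4 statements merged into one kernel-verified Lean document; each statement's English description precedes it below -/
import Mathlib

section
/- The group G_B is nilpotent of nilpotency class at most 3: for all g₁, g₂, g₃, g₄ ∈ G_B the iterated commutator ⁅⁅⁅g₁,g₂⁆,g₃⁆,g₄⁆ equals the identity (0,0,0,0), where ⁅g,h⁆ = g·h·g⁻¹·h⁻¹. -/
/-- The multiplication of `G_B` on `ℝ × ℝ^r × ℝ × ℝ^r`, for a bilinear form `B` on `ℝ^r`. -/
noncomputable def gMul {r : ℕ} (B : (Fin r → ℝ) →ₗ[ℝ] (Fin r → ℝ) →ₗ[ℝ] ℝ)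
    (g g' : ℝ × (Fin r → ℝ) × ℝ × (Fin r → ℝ)) : ℝ × (Fin r → ℝ) × ℝ × (Fin r → ℝ) :=
  (g.1 + g'.1 + B g.2.2.2 g'.2.1 + B g.2.2.2 g.2.2.2 / 2 * g'.2.2.1,
    g.2.1 + g'.2.1 + g'.2.2.1 • g.2.2.2,
    g.2.2.1 + g'.2.2.1,
    g.2.2.2 + g'.2.2.2)

/-- The inversion of `G_B`: `(z,c,b,a)⁻¹ = (−z + B(a,c) − Q(a)b, −c + b·a, −b, −a)`. -/
noncomputable def gInv {r : ℕ} (B : (Fin r → ℝ) →ₗ[ℝ] (Fin r → ℝ) →ₗ[ℝ] ℝ)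
    (g : ℝ × (Fin r → ℝ) × ℝ × (Fin r → ℝ)) : ℝ × (Fin r → ℝ) × ℝ × (Fin r → ℝ) :=
  (-g.1 + B g.2.2.2 g.2.1 - B g.2.2.2 g.2.2.2 / 2 * g.2.2.1,
    -g.2.1 + g.2.2.1 • g.2.2.2,
    -g.2.2.1,
    -g.2.2.2)

/-- The commutator `⁅g,h⁆ = g·h·g⁻¹·h⁻¹` in `G_B`. -/
noncomputable def gComm {r : ℕ} (B : (Fin r → ℝ) →ₗ[ℝ] (Fin r → ℝ) →ₗ[ℝ] ℝ)
    (g h : ℝ × (Fin r → ℝ) × ℝ × (Fin r → ℝ)) : ℝ × (Fin r → ℝ) × ℝ × (Fin r → ℝ) :=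
  gMul B (gMul B (gMul B g h) (gInv B g)) (gInv B h)

/-!
Every commutator has vanishing `(b, a)`-part, and for such an element `g = (z, c, 0, 0)` the
commutator `⁅g, (z', c', b', a')⁆` is `(-B(a', c), 0, 0, 0)`. Applying this twice, the triple
commutator is `(-B(a₄, 0), 0, 0, 0) = 0`.
-/

variable {r : ℕ} (B : (Fin r → ℝ) →ₗ[ℝ] (Fin r → ℝ) →ₗ[ℝ] ℝ)

lemma gComm_snd_snd_eq_zero (g h : ℝ × (Fin r → ℝ) × ℝ × (Fin r → ℝ)) : (gComm B g h).2.2 = 0 := by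
  obtain ⟨z, c, b, a⟩ := g
  obtain ⟨z', c', b', a'⟩ := h
  simp only [gComm, gMul, gInv, Prod.mk_eq_zero]
  constructor
  · ring
  · abel

lemma gComm_of_snd_snd_eq_zero {g : ℝ × (Fin r → ℝ) × ℝ × (Fin r → ℝ)} (hg : g.2.2 = 0)
    (h : ℝ × (Fin r → ℝ) × ℝ × (Fin r → ℝ)) : gComm B g h = (-B h.2.2.2 g.2.1, 0, 0, 0) := by
  obtain ⟨z, c, b, a⟩ := g
  obtain ⟨z', c', b', a'⟩ := h
  obtain ⟨rfl, rfl⟩ := Prod.mk_eq_zero.mp hg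
  simp only [gComm, gMul, gInv, Prod.mk.injEq, map_add, map_neg, map_smul, map_zero,
    LinearMap.add_apply, LinearMap.zero_apply, neg_zero, smul_eq_mul, zero_smul]
  refine ⟨by ring, by module, by ring, by module⟩

theorem stmt5_general (r : ℕ)
    (B : (Fin r → ℝ) →ₗ[ℝ] (Fin r → ℝ) →ₗ[ℝ] ℝ) :
    ∀ g₁ g₂ g₃ g₄ : ℝ × (Fin r → ℝ) × ℝ × (Fin r → ℝ),
      gComm B (gComm B (gComm B g₁ g₂) g₃) g₄ = (0, 0, 0, 0) := by
  intro g₁ g₂ g₃ g₄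
  rw [gComm_of_snd_snd_eq_zero B (gComm_snd_snd_eq_zero B g₁ g₂),
    gComm_of_snd_snd_eq_zero B rfl]
  simp

theorem stmt5 (r : ℕ) (hr : 1 ≤ r)
    (B : (Fin r → ℝ) →ₗ[ℝ] (Fin r → ℝ) →ₗ[ℝ] ℝ)
    (hB : ∀ x y, B x y = B y x) :
    ∀ g₁ g₂ g₃ g₄ : ℝ × (Fin r → ℝ) × ℝ × (Fin r → ℝ),
      gComm B (gComm B (gComm B g₁ g₂) g₃) g₄ = (0, 0, 0, 0) :=
  stmt5_general r B
end

section
/- Assume δ ≠ 0 and that the Gram matrix of B with respect to the standard basis is invertible. Then the induced representation of G_B on L²(ℝ^r, ℂ) is irreducible: every closed ℂ-linear subspace V of L²(ℝ^r, ℂ) satisfying U_g(V) ⊆ V for all g ∈ G_B is either {0} or all of L²(ℝ^r, ℂ). -/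
/-!
A nonzero closed invariant subspace `V` contains some `f ≠ 0`; let `g ⊥ V`. Since `δ • M` is
invertible, the elements `(0, c, 0, a)` act by all modulated translates
`x ↦ 𝐞 (x ⬝ᵥ ξ) • f (x + a)`, so every Fourier coefficient of the integrable function
`x ↦ conj (f (x + a)) * g x` vanishes and it is zero a.e. Thus `g` vanishes a.e. on every
translate of the support of `f`, and Fubini on `{(a, x) | f (x + a) ≠ 0 ∧ g x ≠ 0}` gives
`μ (support f) * μ (support g) = 0`, i.e. `g = 0`.
-/

open MeasureTheory FourierTransform

namespace MeasureTheory

theorem Integrable.ae_eq_zero_of_fourier_eq_zero {V : Type*} [NormedAddCommGroup V]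
    [InnerProductSpace ℝ V] [FiniteDimensional ℝ V] [MeasurableSpace V] [BorelSpace V]
    {F : V → ℂ} (hF : Integrable F) (h : 𝓕 F = 0) : F =ᵐ[volume] 0 := by
  have pairing_eq_zero (φ : SchwartzMap V ℂ) : ∫ x, F x * φ x = 0 := by
    set ψ : SchwartzMap V ℂ := 𝓕⁻ φ
    have hψ : 𝓕 (ψ : V → ℂ) = φ := by
      rw [← SchwartzMap.fourier_coe, FourierInvPair.fourier_fourierInv_eq]
    have parseval := VectorFourier.integral_fourierIntegral_smul_eq_flip (L := innerₗ V)
      (μ := volume) (ν := volume) Real.continuous_fourierChar continuous_inner hF ψ.integrable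
    rw [flip_innerₗ] at parseval
    calc ∫ x, F x * φ x = ∫ x, F x • 𝓕 (ψ : V → ℂ) x := by rw [hψ]; rfl
      _ = ∫ ξ, 𝓕 F ξ • ψ ξ := parseval.symm
      _ = 0 := by simp [h]
  refine ae_eq_zero_of_integral_contDiff_smul_eq_zero hF.locallyIntegrable fun g hg hgs => ?_
  simp only [Complex.real_smul, mul_comm]
  exact pairing_eq_zero
    ((hgs.comp_left Complex.ofReal_zero).toSchwartzMap (Complex.ofRealCLM.contDiff.comp hg))

theorem Integrable.ae_eq_zero_of_integral_fourierChar_dotProduct_eq_zero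
    {ι : Type*} [Fintype ι] {F : (ι → ℝ) → ℂ} (hF : Integrable F)
    (h : ∀ ξ, ∫ x, 𝐞 (-(x ⬝ᵥ ξ)) • F x = 0) : F =ᵐ[volume] 0 := by
  have hofLp := PiLp.volume_preserving_ofLp ι
  have hofLp_emb : MeasurableEmbedding (WithLp.ofLp : EuclideanSpace ℝ ι → ι → ℝ) :=
    (MeasurableEquiv.toLp 2 (ι → ℝ)).symm.measurableEmbedding
  have hG : Integrable (F ∘ (WithLp.ofLp : EuclideanSpace ℝ ι → ι → ℝ)) :=
    (hofLp.integrable_comp hF.1).2 hF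
  have hG_fourier : 𝓕 (F ∘ (WithLp.ofLp : EuclideanSpace ℝ ι → ι → ℝ)) = 0 := by
    ext w
    rw [Real.fourier_eq, Pi.zero_apply, ← h w.ofLp, ← hofLp.integral_comp hofLp_emb]
    simp [EuclideanSpace.inner_eq_star_dotProduct, dotProduct_comm]
  exact (PiLp.volume_preserving_toLp ι).quasiMeasurePreserving.ae_eq_comp
    (hG.ae_eq_zero_of_fourier_eq_zero hG_fourier)

theorem measure_eq_zero_or_of_forall_measure_preimage_add_right_inter_eq_zero
    {G : Type*} [MeasurableSpace G] [AddGroup G] [MeasurableAdd₂ G] {μ : Measure G} [SFinite μ]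
    [μ.IsAddLeftInvariant] {s t : Set G} (hs : MeasurableSet s) (ht : MeasurableSet t)
    (h : ∀ a, μ ((· + a) ⁻¹' s ∩ t) = 0) : μ s = 0 ∨ μ t = 0 := by
  set S : Set (G × G) := {p | p.2 + p.1 ∈ s ∧ p.2 ∈ t}
  have hS : MeasurableSet S :=
    (hs.preimage (measurable_snd.add measurable_fst)).inter (ht.preimage measurable_snd)
  have hS_null : μ.prod μ S = 0 := by
    rw [Measure.prod_apply hS]
    exact lintegral_eq_zero_of_ae_eq_zero (Filter.Eventually.of_forall h)
  have hS_eq : μ.prod μ S = μ s * μ t := by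
    rw [Measure.prod_apply_symm hS, ← lintegral_indicator_const ht]
    congr with x
    by_cases hx : x ∈ t
    · rw [Set.indicator_of_mem hx, ← measure_preimage_add μ x s]
      congr 1 with a
      simp [S, hx]
    · simp [S, hx]
  rw [← mul_eq_zero, ← hS_eq, hS_null]

theorem ae_eq_zero_or_of_forall_ae_add_right_eq_zero_or_eq_zero
    {G M N : Type*} [MeasurableSpace G] [AddGroup G] [MeasurableAdd₂ G] {μ : Measure G}
    [SFinite μ] [μ.IsAddLeftInvariant] [Zero M] [MeasurableSpace M] [MeasurableSingletonClass M]
    [Zero N] [MeasurableSpace N] [MeasurableSingletonClass N] {f : G → M} {g : G → N}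
    (hf : Measurable f) (hg : Measurable g) (h : ∀ a, ∀ᵐ x ∂μ, f (x + a) = 0 ∨ g x = 0) :
    f =ᵐ[μ] 0 ∨ g =ᵐ[μ] 0 := by
  simp only [Filter.EventuallyEq, ae_iff] at h ⊢
  refine measure_eq_zero_or_of_forall_measure_preimage_add_right_inter_eq_zero
    (hf (measurableSet_singleton 0)).compl (hg (measurableSet_singleton 0)).compl fun a => ?_
  simpa [not_or, Set.ofPred_and] using h a

section ModulatedTranslate

variable {ι : Type*} [Fintype ι]

theorem MemLp.fourierChar_smul_comp_add_right {E : Type*} [NormedAddCommGroup E]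
    [NormedSpace ℂ E] {p : ENNReal} {f : (ι → ℝ) → E} (hf : MemLp f p) (ξ a : ι → ℝ) :
    MemLp (fun x => 𝐞 (x ⬝ᵥ ξ) • f (x + a)) p := by
  have hfa := hf.comp_measurePreserving (measurePreserving_add_right volume a)
  refine hfa.of_le ?_ (.of_forall fun x => (Circle.norm_smul _ _).le)
  exact (Real.continuous_fourierChar.comp (continuous_id.dotProduct continuous_const)
    ).aestronglyMeasurable.smul hfa.1

theorem Lp.eq_zero_of_forall_inner_fourierChar_smul_comp_add_right_eq_zero
    {f g : Lp ℂ 2 (volume : Measure (ι → ℝ))} (hf : f ≠ 0)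
    (h : ∀ ξ a, inner ℂ ((Lp.memLp f).fourierChar_smul_comp_add_right ξ a).toLp g = 0) :
    g = 0 := by
  have translate_mul_eq_zero (a : ι → ℝ) : ∀ᵐ x, starRingEnd ℂ (f (x + a)) * g x = 0 := by
    refine Integrable.ae_eq_zero_of_integral_fourierChar_dotProduct_eq_zero ?_ fun ξ => ?_
    · have hfa := (Lp.memLp f).comp_measurePreserving (measurePreserving_add_right volume a)
      refine (L2.integrable_inner (𝕜 := ℂ) (hfa.toLp _) g).congr ?_
      filter_upwards [hfa.coeFn_toLp] with x hx
      rw [RCLike.inner_apply', hx, Function.comp_apply]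
    · rw [← h ξ a, L2.inner_def]
      refine integral_congr_ae ?_
      filter_upwards [((Lp.memLp f).fourierChar_smul_comp_add_right ξ a).coeFn_toLp] with x hx
      rw [RCLike.inner_apply', hx]
      simp only [Circle.smul_def, smul_eq_mul, map_mul, Circle.starRingEnd_addChar]
      ring
  have := ae_eq_zero_or_of_forall_ae_add_right_eq_zero_or_eq_zero (μ := volume)
    (Lp.stronglyMeasurable f).measurable (Lp.stronglyMeasurable g).measurable fun a =>
      (translate_mul_eq_zero a).mono fun x hx => by simpa only [mul_eq_zero, map_eq_zero] using hx
  rw [Lp.eq_zero_iff_ae_eq_zero]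
  exact this.resolve_left (mt Lp.eq_zero_iff_ae_eq_zero.2 hf)

theorem Lp.submodule_eq_bot_or_eq_top_of_fourierChar_smul_comp_add_right_mem
    (V : Submodule ℂ (Lp ℂ 2 (volume : Measure (ι → ℝ))))
    (hV : IsClosed (V : Set (Lp ℂ 2 (volume : Measure (ι → ℝ)))))
    (hinv : ∀ ξ a, ∀ f ∈ V, ((Lp.memLp f).fourierChar_smul_comp_add_right ξ a).toLp ∈ V) :
    V = ⊥ ∨ V = ⊤ := by
  refine or_iff_not_imp_left.2 fun hbot => ?_
  obtain ⟨f, hfV, hf⟩ := Submodule.exists_mem_ne_zero_of_ne_bot hbot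
  have : CompleteSpace V := hV.completeSpace_coe
  rw [← Submodule.orthogonal_eq_bot_iff, Submodule.eq_bot_iff]
  exact fun g hg => eq_zero_of_forall_inner_fourierChar_smul_comp_add_right_eq_zero hf
    fun ξ a => (Submodule.mem_orthogonal V g).1 hg _ (hinv ξ a f hfV)

end ModulatedTranslate

end MeasureTheory

theorem mul_dotProduct_mulVec_inv_smul_inv_mulVec {ι : Type*} [Fintype ι] [DecidableEq ι]
    {M : Matrix ι ι ℝ} (hM : IsUnit M.det) {δ : ℝ} (hδ : δ ≠ 0) (x ξ : ι → ℝ) :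
    δ * (x ⬝ᵥ M.mulVec (δ⁻¹ • M⁻¹.mulVec ξ)) = x ⬝ᵥ ξ := by
  rw [Matrix.mulVec_smul, Matrix.mulVec_mulVec, Matrix.mul_nonsing_inv _ hM, Matrix.one_mulVec,
    dotProduct_smul, smul_eq_mul, mul_inv_cancel_left₀ hδ]

theorem stmt12_general (r : ℕ)
    (M : Matrix (Fin r) (Fin r) ℝ) (hMdet : IsUnit M.det)
    (δ β : ℝ) (hδ : δ ≠ 0)
    (U : ℝ × (Fin r → ℝ) × ℝ × (Fin r → ℝ) → ((Fin r → ℝ) → ℂ) → ((Fin r → ℝ) → ℂ))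
    (hU : ∀ g f x, U g f x =
      Complex.exp (2 * Real.pi * Complex.I *
        (δ * (g.1 + x ⬝ᵥ M.mulVec g.2.1 + (x ⬝ᵥ M.mulVec x) / 2 * g.2.2.1)
          + β * g.2.2.1 : ℝ)) *
        f (x + g.2.2.2))
    (V : Submodule ℂ (Lp ℂ 2 (volume : Measure (Fin r → ℝ))))
    (hVclosed : IsClosed (V : Set (Lp ℂ 2 (volume : Measure (Fin r → ℝ)))))
    (hVinv : ∀ g : ℝ × (Fin r → ℝ) × ℝ × (Fin r → ℝ),
      ∀ f : Lp ℂ 2 (volume : Measure (Fin r → ℝ)), f ∈ V →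
      ∀ h : Lp ℂ 2 (volume : Measure (Fin r → ℝ)),
        (h : (Fin r → ℝ) → ℂ) =ᵐ[volume] U g (f : (Fin r → ℝ) → ℂ) → h ∈ V) :
    V = ⊥ ∨ V = ⊤ := by
  refine Lp.submodule_eq_bot_or_eq_top_of_fourierChar_smul_comp_add_right_mem V hVclosed
    fun ξ a f hf => hVinv (0, δ⁻¹ • M⁻¹.mulVec ξ, 0, a) f hf _ ?_
  filter_upwards [((Lp.memLp f).fourierChar_smul_comp_add_right ξ a).coeFn_toLp] with x hx
  simp only [hx, hU, zero_add, mul_zero, add_zero]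
  rw [mul_dotProduct_mulVec_inv_smul_inv_mulVec hMdet hδ, Circle.smul_def,
    Real.fourierChar_apply, smul_eq_mul]
  push_cast
  ring_nf

theorem stmt12 (r : ℕ) (hr : 1 ≤ r)
    (M : Matrix (Fin r) (Fin r) ℝ) (hM : M.IsSymm) (hMdet : IsUnit M.det)
    (δ β : ℝ) (hδ : δ ≠ 0)
    (U : ℝ × (Fin r → ℝ) × ℝ × (Fin r → ℝ) → ((Fin r → ℝ) → ℂ) → ((Fin r → ℝ) → ℂ))
    (hU : ∀ g f x, U g f x =
      Complex.exp (2 * Real.pi * Complex.I *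
        (δ * (g.1 + x ⬝ᵥ M.mulVec g.2.1 + (x ⬝ᵥ M.mulVec x) / 2 * g.2.2.1)
          + β * g.2.2.1 : ℝ)) *
        f (x + g.2.2.2))
    (V : Submodule ℂ (Lp ℂ 2 (volume : Measure (Fin r → ℝ))))
    (hVclosed : IsClosed (V : Set (Lp ℂ 2 (volume : Measure (Fin r → ℝ)))))
    (hVinv : ∀ g : ℝ × (Fin r → ℝ) × ℝ × (Fin r → ℝ),
      ∀ f : Lp ℂ 2 (volume : Measure (Fin r → ℝ)), f ∈ V →
      ∀ h : Lp ℂ 2 (volume : Measure (Fin r → ℝ)),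
        (h : (Fin r → ℝ) → ℂ) =ᵐ[volume] U g (f : (Fin r → ℝ) → ℂ) → h ∈ V) :
    V = ⊥ ∨ V = ⊤ :=
  stmt12_general r M hMdet δ β hδ U hU V hVclosed hVinv
end

section
/- Let x be a real number with 0 < x < 1. Then there exists an entire function F : ℂ → ℂ such that for every s ∈ ℂ with Re(s) > 1 the series Σ_{k∈ℤ} sign(k+x)·|k+x|^(−s) converges absolutely to F(s), and F(0) = 1 − 2x. -/
/-!
Take `F = 2 ζ_odd(x, ·)`, an entire function whose Dirichlet series over `ℤ` is
`∑ sign(k + x) |k + x|^{-s}`. For `Re s > 1` the `ℕ`-series of `2 ζ_odd(x, s)` is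
`∑ ((n + x)^{-s} - (n + 1 - x)^{-s})`. Subtracting `s (1 - 2x) (n + 1)^{-s-1}`, the terms of
`(1 - 2x) s ζ(s + 1)`, turns each term into a second-order Taylor remainder of `u ↦ u^{-s}`, of
size `|s| |s + 1| n^{-Re s - 2}`. The corrected series `G` is therefore holomorphic near `0`, and
`G 0 = 0`. The identity theorem gives `2 ζ_odd(x, s) = G s + (1 - 2x) s ζ(s + 1)` for small `s`
with `Re s > 0`, and letting `s → 0⁺`, where `s ζ(s + 1) → 1`, yields `2 ζ_odd(x, 0) = 1 - 2x`.
-/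

open Complex HurwitzZeta Set Filter Topology

lemma norm_ofReal_cpow_sub_ofReal_cpow_le {M u v : ℝ} (hM : 0 < M) (hu : M ≤ u) (hv : M ≤ v)
    {w : ℂ} (hw : w.re ≤ 1) :
    ‖(u : ℂ) ^ w - (v : ℂ) ^ w‖ ≤ ‖w‖ * M ^ (w.re - 1) * |u - v| := by
  rcases eq_or_ne w 0 with rfl | hw0
  · simp
  have hderiv : ∀ y ∈ Ici M,
      HasDerivWithinAt (fun y : ℝ => (y : ℂ) ^ w) (w * (y : ℂ) ^ (w - 1)) (Ici M) y :=
    fun y hy => (hasDerivAt_ofReal_cpow_const (hM.trans_le hy).ne' hw0).hasDerivWithinAt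
  have hbound : ∀ y ∈ Ici M, ‖w * (y : ℂ) ^ (w - 1)‖ ≤ ‖w‖ * M ^ (w.re - 1) := by
    intro y hy
    rw [norm_mul, norm_cpow_eq_rpow_re_of_pos (hM.trans_le hy), sub_re, one_re]
    exact mul_le_mul_of_nonneg_left (Real.rpow_le_rpow_of_nonpos hM hy (by linarith))
      (norm_nonneg w)
  simpa [Real.norm_eq_abs] using
    (convex_Ici M).norm_image_sub_le_of_norm_hasDerivWithin_le hderiv hbound hv hu

lemma norm_ofReal_cpow_sub_sub_deriv_le {M a b c : ℝ} (hM : 0 < M) (ha : a ∈ Icc M c)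
    (hb : b ∈ Icc M c) (hc : c ≤ M + 1) {w : ℂ} (hw : w.re ≤ 2) :
    ‖(a : ℂ) ^ w - (b : ℂ) ^ w - w * (c : ℂ) ^ (w - 1) * (a - b : ℝ)‖ ≤
      ‖w‖ * ‖w - 1‖ * M ^ (w.re - 2) * |a - b| := by
  set φ : ℝ → ℂ := fun u => (u : ℂ) ^ w - w * (c : ℂ) ^ (w - 1) * u
  have hderiv : ∀ u ∈ Icc M c, HasDerivWithinAt φ
      (w * ((u : ℂ) ^ (w - 1) - (c : ℂ) ^ (w - 1))) (Icc M c) u := by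
    intro u hu
    rcases eq_or_ne w 0 with rfl | hw0
    · simpa [φ] using hasDerivWithinAt_const u (Icc M c) (1 : ℂ)
    have := (hasDerivAt_ofReal_cpow_const (hM.trans_le hu.1).ne' hw0).fun_sub
      ((ofRealCLM.hasDerivAt (x := u)).const_mul (w * (c : ℂ) ^ (w - 1)))
    simpa [φ, mul_sub] using this.hasDerivWithinAt
  have hbound : ∀ u ∈ Icc M c, ‖w * ((u : ℂ) ^ (w - 1) - (c : ℂ) ^ (w - 1))‖ ≤
      ‖w‖ * ‖w - 1‖ * M ^ (w.re - 2) := by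
    intro u hu
    have hw1 : (w - 1).re ≤ 1 := by rw [sub_re, one_re]; linarith
    have hcu : |u - c| ≤ 1 := by rw [abs_sub_comm, abs_of_nonneg] <;> linarith [hu.1, hu.2]
    have key := norm_ofReal_cpow_sub_ofReal_cpow_le hM hu.1 (hu.1.trans hu.2) hw1
    rw [sub_re, one_re, sub_sub, one_add_one_eq_two] at key
    rw [norm_mul, mul_assoc]
    gcongr
    calc _ ≤ _ := key
      _ ≤ ‖w - 1‖ * M ^ (w.re - 2) * 1 := by gcongr
      _ = _ := mul_one _
  have key := (convex_Icc M c).norm_image_sub_le_of_norm_hasDerivWithin_le hderiv hbound hb ha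
  have hφ : φ a - φ b = (a : ℂ) ^ w - (b : ℂ) ^ w - w * (c : ℂ) ^ (w - 1) * (a - b : ℝ) := by
    simp only [φ]; push_cast; ring
  rwa [hφ, Real.norm_eq_abs] at key

noncomputable def correctedOddTerm (x : ℝ) (n : ℕ) (s : ℂ) : ℂ :=
  ((n + x : ℝ) : ℂ) ^ (-s) - ((n + 1 - x : ℝ) : ℂ) ^ (-s)
    - s * ((1 - 2 * x : ℝ) : ℂ) * ((n + 1 : ℝ) : ℂ) ^ (-s - 1)

lemma norm_correctedOddTerm_le {x : ℝ} (hx : x ∈ Ioo 0 1) (n : ℕ) {s : ℂ} (hs : -2 ≤ s.re) :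
    ‖correctedOddTerm x n s‖ ≤ ‖s‖ * ‖s + 1‖ * (n + min x (1 - x)) ^ (-s.re - 2) := by
  obtain ⟨hx0, hx1⟩ := hx
  have hm : 0 < min x (1 - x) := lt_min hx0 (sub_pos.2 hx1)
  have hM : (0 : ℝ) < n + min x (1 - x) := by positivity
  have ha : (n + x : ℝ) ∈ Icc (n + min x (1 - x)) (n + 1) :=
    ⟨by linarith [min_le_left x (1 - x)], by linarith⟩
  have hb : (n + 1 - x : ℝ) ∈ Icc (n + min x (1 - x)) (n + 1) :=
    ⟨by linarith [min_le_right x (1 - x)], by linarith⟩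
  have key := norm_ofReal_cpow_sub_sub_deriv_le hM ha hb (by linarith) (w := -s)
    (by rw [neg_re]; linarith)
  have hab : |(n + x : ℝ) - (n + 1 - x)| ≤ 1 := by rw [abs_le]; constructor <;> linarith
  have hterm : correctedOddTerm x n s =
      ((n + x : ℝ) : ℂ) ^ (-s) - ((n + 1 - x : ℝ) : ℂ) ^ (-s)
      - -s * ((n + 1 : ℝ) : ℂ) ^ (-s - 1) * ((n + x - (n + 1 - x) : ℝ) : ℂ) := by
    simp only [correctedOddTerm]; push_cast; ring
  rw [hterm]
  calc _ ≤ _ := key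
    _ ≤ ‖-s‖ * ‖-s - 1‖ * (n + min x (1 - x)) ^ ((-s).re - 2) * 1 := by gcongr
    _ = _ := by
      rw [norm_neg, mul_one, neg_re, show -s - 1 = -(s + 1) by ring, norm_neg]

lemma Real.rpow_le_rpow_add_rpow {t p q e : ℝ} (ht : 0 < t) (hpe : p ≤ e) (heq : e ≤ q) :
    t ^ e ≤ t ^ p + t ^ q := by
  rcases le_total t 1 with h | h
  · linarith [Real.rpow_le_rpow_of_exponent_ge ht h hpe, Real.rpow_nonneg ht.le q]
  · linarith [Real.rpow_le_rpow_of_exponent_le h heq, Real.rpow_nonneg ht.le p]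

lemma differentiable_correctedOddTerm {x : ℝ} (hx : x ∈ Ioo 0 1) (n : ℕ) :
    Differentiable ℂ (correctedOddTerm x n) := by
  have ha : ((n + x : ℝ) : ℂ) ≠ 0 :=
    ofReal_ne_zero.mpr (by linarith [hx.1, n.cast_nonneg (α := ℝ)])
  have hb : ((n + 1 - x : ℝ) : ℂ) ≠ 0 :=
    ofReal_ne_zero.mpr (by linarith [hx.2, n.cast_nonneg (α := ℝ)])
  have hc : ((n + 1 : ℝ) : ℂ) ≠ 0 := ofReal_ne_zero.mpr (by positivity)
  exact ((differentiable_neg.const_cpow (.inl ha)).sub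
    (differentiable_neg.const_cpow (.inl hb))).sub
    ((differentiable_id.mul_const _).mul ((differentiable_neg.sub_const 1).const_cpow (.inl hc)))

lemma differentiableOn_tsum_correctedOddTerm {x : ℝ} (hx : x ∈ Ioo 0 1) :
    DifferentiableOn ℂ (fun s => ∑' n, correctedOddTerm x n s) (Metric.ball 1 (3 / 2)) := by
  set m := min x (1 - x)
  have hm : 0 < m := lt_min hx.1 (by linarith [hx.2])
  have hsum (q : ℝ) (hq : 1 < q) : Summable fun n : ℕ => ((n : ℝ) + m) ^ (-q) := by
    refine ((Real.summable_one_div_nat_add_rpow m q).mpr hq).congr fun n => ?_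
    rw [abs_of_pos (by positivity), one_div, Real.rpow_neg (by positivity)]
  -- on the ball, `-1/2 < Re s < 5/2`, so the exponent `-Re s - 2` lies in `[-9/2, -3/2]`
  refine differentiableOn_tsum_of_summable_norm
    (((hsum (9 / 2) (by norm_num)).add (hsum (3 / 2) (by norm_num))).mul_left 12)
    (fun n => (differentiable_correctedOddTerm hx n).differentiableOn) Metric.isOpen_ball ?_
  intro n s hs
  have hs1 : ‖s - 1‖ < 3 / 2 := by rwa [Metric.mem_ball, dist_eq_norm] at hs
  have hre : |s.re - 1| < 3 / 2 := by
    simpa using (abs_re_le_norm (s - 1)).trans_lt hs1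
  rw [abs_lt] at hre
  have hs_norm : ‖s‖ ≤ 3 := by
    linarith [norm_le_norm_add_norm_sub' s (1 : ℂ), norm_one (α := ℂ), norm_sub_rev s 1]
  have hs1_norm : ‖s + 1‖ ≤ 4 := by
    linarith [norm_add_le s 1, norm_one (α := ℂ)]
  calc ‖correctedOddTerm x n s‖
      ≤ ‖s‖ * ‖s + 1‖ * ((n : ℝ) + m) ^ (-s.re - 2) :=
        norm_correctedOddTerm_le hx n (by linarith)
    _ ≤ 3 * 4 * (((n : ℝ) + m) ^ (-(9 / 2 : ℝ)) + ((n : ℝ) + m) ^ (-(3 / 2 : ℝ))) := by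
        gcongr
        exact Real.rpow_le_rpow_add_rpow (by positivity) (by linarith) (by linarith)
    _ = _ := by norm_num

lemma hasSum_correctedOddTerm {x : ℝ} (hx : x ∈ Ioo 0 1) {s : ℂ} (hs : 1 < s.re) :
    HasSum (fun n => correctedOddTerm x n s)
      (2 * hurwitzZetaOdd x s - s * ((1 - 2 * x : ℝ) : ℂ) * riemannZeta (s + 1)) := by
  have hodd : HasSum (fun n : ℕ => ((n + x : ℝ) : ℂ) ^ (-s) - ((n + 1 - x : ℝ) : ℂ) ^ (-s))
      (2 * hurwitzZetaOdd x s) := by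
    refine ((hasSum_nat_hurwitzZetaOdd_of_mem_Icc (Ioo_subset_Icc_self hx) hs).mul_left 2
      ).congr_fun fun n => ?_
    push_cast [cpow_neg]
    ring
  have hre : 1 < (s + 1).re := by rw [add_re, one_re]; linarith
  have hzeta : HasSum (fun n : ℕ => ((n + 1 : ℝ) : ℂ) ^ (-s - 1)) (riemannZeta (s + 1)) := by
    have h := hasSum_hurwitzZeta_of_one_lt_re (right_mem_Icc.2 zero_le_one) hre
    rw [AddCircle.coe_period, hurwitzZeta_zero] at h
    refine h.congr_fun fun n => ?_
    rw [show -s - 1 = -(s + 1) by ring, cpow_neg]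
    push_cast
    ring
  exact hodd.sub (hzeta.mul_left (s * ((1 - 2 * x : ℝ) : ℂ)))

lemma tendsto_mul_riemannZeta_add_one :
    Tendsto (fun s : ℂ => s * riemannZeta (s + 1)) (𝓝[≠] 0) (𝓝 1) := by
  have h : Tendsto (fun s : ℂ => s + 1) (𝓝[≠] 0) (𝓝[≠] 1) :=
    tendsto_nhdsWithin_of_tendsto_nhds_of_eventually_within _
      ((continuous_add_const 1).tendsto' 0 1 (zero_add 1) |>.mono_left nhdsWithin_le_nhds)
      (eventually_nhdsWithin_of_forall fun s hs => by simpa using hs)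
  exact (riemannZeta_residue_one.comp h).congr fun s => by simp

lemma eqOn_two_mul_hurwitzZetaOdd {x : ℝ} (hx : x ∈ Ioo 0 1) :
    EqOn (fun s => 2 * hurwitzZetaOdd x s)
      (fun s => ∑' n, correctedOddTerm x n s + ((1 - 2 * x : ℝ) : ℂ) * (s * riemannZeta (s + 1)))
      (Metric.ball 1 (3 / 2) ∩ {s | 0 < s.re}) := by
  have hopen : IsOpen (Metric.ball (1 : ℂ) (3 / 2) ∩ {s | 0 < s.re}) :=
    Metric.isOpen_ball.inter (isOpen_lt continuous_const continuous_re)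
  have hzeta : DifferentiableOn ℂ (fun s => s * riemannZeta (s + 1))
      (Metric.ball 1 (3 / 2) ∩ {s | 0 < s.re}) := fun s hs =>
    (differentiableAt_id.mul ((differentiableAt_riemannZeta fun h => by
      simp_all [add_eq_right]).comp s (differentiableAt_id.add_const 1))).differentiableWithinAt
  refine AnalyticOnNhd.eqOn_of_preconnected_of_eventuallyEq (z₀ := 2)
    (((differentiable_hurwitzZetaOdd x).const_mul 2).differentiableOn.analyticOnNhd hopen)
    (((differentiableOn_tsum_correctedOddTerm hx).mono inter_subset_left).add
      (hzeta.const_mul _) |>.analyticOnNhd hopen)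
    ((convex_ball _ _).inter (convex_halfSpace_re_gt 0)).isPreconnected
    ⟨by rw [Metric.mem_ball, dist_eq_norm]; norm_num, by norm_num⟩ ?_
  filter_upwards [(isOpen_lt continuous_const continuous_re).mem_nhds
    (show (1 : ℝ) < (2 : ℂ).re by norm_num)] with s hs
  rw [(hasSum_correctedOddTerm hx hs).tsum_eq]
  ring

lemma two_mul_hurwitzZetaOdd_zero {x : ℝ} (hx : x ∈ Ioo 0 1) :
    2 * hurwitzZetaOdd x 0 = ((1 - 2 * x : ℝ) : ℂ) := by
  set G := fun s => ∑' n, correctedOddTerm x n s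
  have hpath : Tendsto (fun t : ℝ => (t : ℂ)) (𝓝[>] 0) (𝓝[≠] 0) :=
    tendsto_nhdsWithin_of_tendsto_nhds_of_eventually_within _
      (continuous_ofReal.tendsto' 0 0 ofReal_zero |>.mono_left nhdsWithin_le_nhds)
      (eventually_nhdsWithin_of_forall fun t ht => ofReal_ne_zero.2 (ne_of_gt ht))
  have hG : ContinuousAt G 0 :=
    ((differentiableOn_tsum_correctedOddTerm hx).continuousOn).continuousAt
      (Metric.isOpen_ball.mem_nhds (by rw [Metric.mem_ball, dist_eq_norm]; norm_num))
  have hG0 : G 0 = 0 := by simp [G, correctedOddTerm]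
  have hlim_lhs : Tendsto (fun t : ℝ => G t + ((1 - 2 * x : ℝ) : ℂ) * (t * riemannZeta (t + 1)))
      (𝓝[>] 0) (𝓝 (2 * hurwitzZetaOdd x 0)) := by
    refine (((differentiable_hurwitzZetaOdd x).continuous.tendsto 0).const_mul 2).comp
      (hpath.mono_right nhdsWithin_le_nhds) |>.congr' ?_
    filter_upwards [Ioo_mem_nhdsGT (show (0 : ℝ) < 1 by norm_num)] with t ht
    refine eqOn_two_mul_hurwitzZetaOdd hx ⟨?_, by simpa using ht.1⟩
    rw [Metric.mem_ball, dist_eq_norm, ← ofReal_one, ← ofReal_sub, norm_real, Real.norm_eq_abs,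
      abs_lt]
    constructor <;> linarith [ht.1, ht.2]
  have hlim_rhs := ((hG.tendsto.comp (hpath.mono_right nhdsWithin_le_nhds)).add
    ((tendsto_mul_riemannZeta_add_one.comp hpath).const_mul ((1 - 2 * x : ℝ) : ℂ)))
  rw [hG0, zero_add, mul_one] at hlim_rhs
  exact tendsto_nhds_unique hlim_lhs hlim_rhs

lemma ofReal_real_sign (t : ℝ) : ((Real.sign t : ℝ) : ℂ) = SignType.sign t := by
  rcases lt_trichotomy t 0 with h | h | h <;> simp [Real.sign_of_neg, Real.sign_of_pos, h]

lemma ofReal_real_sign_mul_exp_neg_mul_log_abs {t : ℝ} (ht : t ≠ 0) (s : ℂ) :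
    ((Real.sign t : ℝ) : ℂ) * exp (-s * (Real.log |t| : ℝ)) =
      SignType.sign t / ((|t| : ℝ) : ℂ) ^ s := by
  rw [ofReal_real_sign, cpow_def_of_ne_zero (ofReal_ne_zero.2 (abs_ne_zero.2 ht)),
    ← ofReal_log (abs_nonneg t), div_eq_mul_inv, ← exp_neg]
  ring_nf

lemma norm_ofReal_real_sign_mul_exp_neg_mul_log_abs {t : ℝ} (ht : t ≠ 0) (s : ℂ) :
    ‖((Real.sign t : ℝ) : ℂ) * exp (-s * (Real.log |t| : ℝ))‖ = 1 / |t| ^ s.re := by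
  rw [ofReal_real_sign_mul_exp_neg_mul_log_abs ht, norm_div,
    norm_cpow_eq_rpow_re_of_pos (abs_pos.2 ht)]
  rcases ht.lt_or_gt with h | h <;> simp [h]

theorem stmt14 (x : ℝ) (hx0 : 0 < x) (hx1 : x < 1) :
    ∃ F : ℂ → ℂ, Differentiable ℂ F ∧
      (∀ s : ℂ, 1 < s.re →
        Summable (fun k : ℤ =>
          ‖((Real.sign ((k : ℝ) + x) : ℝ) : ℂ) *
            Complex.exp (-s * (Real.log |(k : ℝ) + x| : ℝ))‖) ∧
        HasSum (fun k : ℤ =>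
          ((Real.sign ((k : ℝ) + x) : ℝ) : ℂ) *
            Complex.exp (-s * (Real.log |(k : ℝ) + x| : ℝ))) (F s)) ∧
      F 0 = ((1 - 2 * x : ℝ) : ℂ) := by
  have hne (k : ℤ) : (k : ℝ) + x ≠ 0 := by
    rcases le_or_gt 0 k with hk | hk
    · have : (0 : ℝ) ≤ k := by exact_mod_cast hk
      positivity
    · have : (k : ℝ) ≤ -1 := by exact_mod_cast Int.le_sub_one_of_lt hk
      linarith
  refine ⟨fun s => 2 * hurwitzZetaOdd x s, (differentiable_hurwitzZetaOdd x).const_mul 2,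
    fun s hs => ⟨?_, ?_⟩, two_mul_hurwitzZetaOdd_zero ⟨hx0, hx1⟩⟩
  · simp_rw [norm_ofReal_real_sign_mul_exp_neg_mul_log_abs (hne _)]
    exact (Real.summable_one_div_int_add_rpow x s.re).2 hs
  · refine ((hasSum_int_hurwitzZetaOdd x hs).mul_left 2).congr_fun fun k => ?_
    rw [ofReal_real_sign_mul_exp_neg_mul_log_abs (hne k)]
    ring
end

section
/- Let M be a 2×2 symmetric positive definite integer matrix with both diagonal entries even, and let D = det M. Then there exists a rational number α' with 12·α' ∈ ℤ such that for every integer d ≥ 1 and every finite set K ⊆ ℤ² containing exactly one element of each coset of the subgroup dMℤ² = {dMk : k ∈ ℤ²} in ℤ², the rational number Σ_{k∈K} (1/(2d))·kᵀM⁻¹k − α'·d³ − (D/4)·d is an integer. -/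
/-!
Write `M = !![2a, b; b, 2c]` and `D = 4ac - b²`. Because the lattice is even, translating `k` by
`d M u` changes `Q̄_d(k) = kᵀM⁻¹k / (2d)` by the integer `k ⬝ u + d (uᵀMu)/2`, so modulo `ℤ` the sum
does not depend on the system of representatives `K`. The column Hermite normal form
`M ℤ² = !![g, 0; q, r] ℤ²` (with `g = gcd(2a, b)`, `g r = D`) shows that the box
`[0, dg) × [0, dr)` is such a system. On it `Q̄_d(k) = (c k₀² - b k₀k₁ + a k₁²) / (dD)`, and the
power sums give `Σ Q̄_d = T(d) / 12` for an integer cubic `T` (`boxCubic`). Finally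
`T(d) - d³ T(1) + 3D(d³ - d) = 3d · d(d-1) · B - C · (d-1)d(d+1)` with `B` and `C` even (for `B`:
if `b` is odd then so are `g` and `r`), which is divisible by `12`; so `α' = (T(1) - 3D) / 12`.
-/

open Matrix

theorem AddSubgroup.sum_sub_sum_mem_of_existsUnique {G A : Type*} [AddCommGroup G]
    [AddCommGroup A] (L : AddSubgroup G) (S : AddSubgroup A) {f : G → A}
    (hf : ∀ x, ∀ y ∈ L, f (x + y) - f x ∈ S) {K K' : Finset G}
    (hK : ∀ v, ∃! k, k ∈ K ∧ v - k ∈ L) (hK' : ∀ v, ∃! k, k ∈ K' ∧ v - k ∈ L) :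
    ∑ k ∈ K, f k - ∑ k ∈ K', f k ∈ S := by
  choose φ hφK' hφL using fun v => (hK' v).exists
  choose ψ hψK hψL using fun v => (hK v).exists
  have hsum : ∑ k ∈ K, f (φ k) = ∑ k ∈ K', f k := by
    refine Finset.sum_nbij' φ ψ (fun k _ => hφK' k) (fun k _ => hψK k) (fun k hk => ?_)
      (fun k hk => ?_) fun _ _ => rfl
    · exact (hK k).unique ⟨hψK _, by simpa using L.add_mem (hφL k) (hψL (φ k))⟩ ⟨hk, by simp⟩
    · exact (hK' k).unique ⟨hφK' _, by simpa using L.add_mem (hψL k) (hφL (ψ k))⟩ ⟨hk, by simp⟩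
  rw [← hsum, ← Finset.sum_sub_distrib]
  exact S.sum_mem fun k _ => by simpa using hf (φ k) (k - φ k) (hφL k)

/-- `Q̄_d(k) = kᵀ M⁻¹ k / (2d)`: the discriminant form of the lattice with Gram matrix `d • M`,
in the coordinates of the dual basis. -/
noncomputable def discrQuadForm {n : Type*} [Fintype n] [DecidableEq n] (M : Matrix n n ℤ)
    (d : ℤ) (k : n → ℤ) : ℚ :=
  (1 / (2 * (d : ℚ))) *
    ((fun i => ((k i : ℚ))) ⬝ᵥ (M.map ((↑) : ℤ → ℚ))⁻¹.mulVec (fun i => ((k i : ℚ))))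

section discrQuadForm

variable {n : Type*} [Fintype n] [DecidableEq n] {M : Matrix n n ℤ}

theorem discrQuadForm_add_smul_mulVec (hM : M.IsSymm) (hdet : M.det ≠ 0) {d : ℤ} (hd : d ≠ 0)
    (k u : n → ℤ) :
    discrQuadForm M d (k + d • M *ᵥ u) =
      discrQuadForm M d k + (k ⬝ᵥ u : ℤ) + d * (u ⬝ᵥ M *ᵥ u : ℤ) / 2 := by
  unfold discrQuadForm
  set N := M.map ((↑) : ℤ → ℚ)
  have hN : IsUnit N.det := by
    rw [isUnit_iff_ne_zero, ← Int.cast_det]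
    exact_mod_cast hdet
  have hNsymm : Nᵀ = N := by rw [← transpose_map, hM.eq]
  set v : n → ℚ := fun i => (k i : ℚ)
  set w : n → ℚ := fun i => (u i : ℚ)
  have hcast : (fun i => ((k + d • M *ᵥ u) i : ℚ)) = v + (d : ℚ) • N *ᵥ w := by
    ext i
    simp [v, w, N, mulVec, dotProduct]
  have hvw : ((k ⬝ᵥ u : ℤ) : ℚ) = v ⬝ᵥ w := by simp [v, w, dotProduct]
  have hwNw : ((u ⬝ᵥ M *ᵥ u : ℤ) : ℚ) = w ⬝ᵥ N *ᵥ w := by simp [N, w, dotProduct, mulVec]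
  have hcross : (N *ᵥ w) ⬝ᵥ N⁻¹ *ᵥ v = v ⬝ᵥ w := by
    rw [← vecMul_transpose, hNsymm, ← dotProduct_mulVec, mulVec_mulVec, mul_nonsing_inv N hN,
      one_mulVec, dotProduct_comm]
  rw [hcast, hvw, hwNw]
  simp only [mulVec_add, mulVec_smul, mulVec_mulVec, nonsing_inv_mul N hN, one_mulVec,
    dotProduct_add, add_dotProduct, dotProduct_smul, smul_dotProduct, hcross, smul_eq_mul]
  rw [dotProduct_comm (N *ᵥ w) w]
  field_simp
  ring

theorem discrQuadForm_add_smul_mulVec_sub_mem (hM : M.IsSymm) (hdet : M.det ≠ 0)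
    (heven : ∀ u, Even (u ⬝ᵥ M *ᵥ u)) {d : ℤ} (hd : d ≠ 0) (k u : n → ℤ) :
    discrQuadForm M d (k + d • M *ᵥ u) - discrQuadForm M d k ∈ (Int.castAddHom ℚ).range := by
  obtain ⟨t, ht⟩ := heven u
  refine ⟨k ⬝ᵥ u + d * t, ?_⟩
  rw [discrQuadForm_add_smul_mulVec hM hdet hd, ht]
  simp only [Int.coe_castAddHom]
  push_cast
  ring

end discrQuadForm

theorem exists_range_mulVec_eq_lowerTriangular {A : Matrix (Fin 2) (Fin 2) ℤ} (hA : 0 < A.det) :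
    ∃ g r : ℕ, ∃ q : ℤ, 0 < g ∧ 0 < r ∧ (g * r : ℤ) = A.det ∧
      Set.range A.mulVec = Set.range !![(g : ℤ), 0; q, r].mulVec := by
  rw [det_fin_two] at hA ⊢
  set g := Int.gcd (A 0 0) (A 0 1)
  have hg : 0 < g := Int.gcd_pos_iff.mpr (by by_contra! h; simp [h.1, h.2] at hA)
  obtain ⟨a', ha'⟩ : (g : ℤ) ∣ A 0 0 := Int.gcd_dvd_left _ _
  obtain ⟨b', hb'⟩ : (g : ℤ) ∣ A 0 1 := Int.gcd_dvd_right _ _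
  set x := Int.gcdA (A 0 0) (A 0 1)
  set y := Int.gcdB (A 0 0) (A 0 1)
  have hbezout : a' * x + b' * y = 1 := mul_left_cancel₀ (by positivity : (g : ℤ) ≠ 0) <| by
    linear_combination -x * ha' - y * hb' - Int.gcd_eq_gcd_ab (A 0 0) (A 0 1)
  have hgr : (g : ℤ) * (a' * A 1 1 - b' * A 1 0) = A 0 0 * A 1 1 - A 0 1 * A 1 0 := by
    linear_combination -A 1 1 * ha' + A 1 0 * hb'
  have hr_pos : 0 < a' * A 1 1 - b' * A 1 0 := pos_of_mul_pos_right (hgr ▸ hA) (by positivity)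
  obtain ⟨r, hr⟩ : ∃ r : ℕ, (r : ℤ) = a' * A 1 1 - b' * A 1 0 :=
    ⟨_, Int.toNat_of_nonneg hr_pos.le⟩
  set q := A 1 0 * x + A 1 1 * y
  -- `A = H U` with `U` unimodular, so `A` and `H` have the same column lattice.
  have hAHU : A = !![(g : ℤ), 0; q, r] * !![a', b'; -y, x] := by
    ext i j; fin_cases i <;> fin_cases j <;> simp [mul_apply, hr]
    exacts [ha', hb', by linear_combination -A 1 0 * hbezout,
      by linear_combination -A 1 1 * hbezout]
  have hU : Function.Surjective (!![a', b'; -y, x]).mulVec :=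
    mulVec_surjective_iff_isUnit.mpr <| (isUnit_iff_isUnit_det _).mpr <| by
      simp [det_fin_two, hbezout]
  refine ⟨g, r, q, hg, by omega, hr ▸ hgr, ?_⟩
  rw [← hU.range_comp !![(g : ℤ), 0; q, r].mulVec, hAHU]
  exact congrArg Set.range (funext fun v => (mulVec_mulVec v _ _).symm)

theorem range_smul_mulVec_lowerTriangular {A : Matrix (Fin 2) (Fin 2) ℤ} {g r : ℕ} {q : ℤ}
    (h : Set.range A.mulVec = Set.range !![(g : ℤ), 0; q, r].mulVec) (d : ℕ) :
    Set.range ((d : ℤ) • A).mulVec =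
      Set.range !![((d * g : ℕ) : ℤ), 0; d * q, (d * r : ℕ)].mulVec := by
  have hscale : ∀ B : Matrix (Fin 2) (Fin 2) ℤ,
      Set.range ((d : ℤ) • B).mulVec = ((d : ℤ) • ·) '' Set.range B.mulVec := fun B => by
    rw [← Set.range_comp]
    exact congrArg Set.range (funext fun v => smul_mulVec _ _ _)
  rw [hscale, h, ← hscale]
  congr 2
  ext i j; fin_cases i <;> fin_cases j <;> simp

def box (P R : ℕ) : Finset (Fin 2 → ℤ) :=
  (Finset.range P ×ˢ Finset.range R).image fun ij => ![(ij.1 : ℤ), ij.2]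

theorem mem_box {P R : ℕ} {k : Fin 2 → ℤ} :
    k ∈ box P R ↔ (0 ≤ k 0 ∧ k 0 < P) ∧ (0 ≤ k 1 ∧ k 1 < R) := by
  constructor
  · rintro hk
    obtain ⟨⟨i, j⟩, hij, rfl⟩ := Finset.mem_image.mp hk
    simp only [Finset.mem_product, Finset.mem_range] at hij
    simp [hij]
  · rintro ⟨⟨h0, h0'⟩, h1, h1'⟩
    refine Finset.mem_image.mpr ⟨((k 0).toNat, (k 1).toNat), by simp; omega, ?_⟩
    ext i; fin_cases i <;> simp <;> omega

theorem lowerTriangular_mulVec (p q r : ℤ) (w : Fin 2 → ℤ) :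
    !![p, 0; q, r] *ᵥ w = ![p * w 0, q * w 0 + r * w 1] := by
  ext i; fin_cases i <;> simp [mulVec, dotProduct, Fin.sum_univ_two]

theorem existsUnique_mem_box_sub_mem_range {P R : ℕ} (hP : 0 < P) (hR : 0 < R) (q : ℤ)
    (v : Fin 2 → ℤ) : ∃! k, k ∈ box P R ∧ v - k ∈ Set.range !![(P : ℤ), 0; q, R].mulVec := by
  simp only [Set.mem_range, lowerTriangular_mulVec]
  refine existsUnique_of_exists_of_unique ?_ ?_
  · refine ⟨![v 0 % P, (v 1 - q * (v 0 / P)) % R], mem_box.mpr ⟨⟨?_, ?_⟩, ?_, ?_⟩,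
      ![v 0 / P, (v 1 - q * (v 0 / P)) / R], ?_⟩
    · exact Int.emod_nonneg _ (by positivity)
    · exact Int.emod_lt_of_pos _ (by positivity)
    · exact Int.emod_nonneg _ (by positivity)
    · exact Int.emod_lt_of_pos _ (by positivity)
    · ext i
      fin_cases i
      · simp only [cons_val_zero, Fin.zero_eta, Pi.sub_apply]
        linear_combination Int.mul_ediv_add_emod (v 0) P
      · simp only [cons_val_zero, cons_val_one, Fin.mk_one, Pi.sub_apply]
        linear_combination Int.mul_ediv_add_emod (v 1 - q * (v 0 / P)) R
  · rintro k k' ⟨hk, w, hw⟩ ⟨hk', w', hw'⟩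
    rw [mem_box] at hk hk'
    have h0 := congrFun hw 0
    have h1 := congrFun hw 1
    have h0' := congrFun hw' 0
    have h1' := congrFun hw' 1
    simp only [cons_val_zero, cons_val_one, Pi.sub_apply] at h0 h1 h0' h1'
    have e0 : k 0 = k' 0 := by
      have := Int.eq_zero_of_abs_lt_dvd (m := P) (x := k' 0 - k 0)
        ⟨w 0 - w' 0, by linear_combination h0' - h0⟩ (abs_lt.mpr ⟨by omega, by omega⟩)
      omega
    have ew : w 0 = w' 0 :=
      mul_left_cancel₀ (by positivity : (P : ℤ) ≠ 0) (by linear_combination h0 - h0' - e0)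
    have e1 : k 1 = k' 1 := by
      have := Int.eq_zero_of_abs_lt_dvd (m := R) (x := k' 1 - k 1)
        ⟨w 1 - w' 1, by linear_combination h1' - h1 + q * ew⟩ (abs_lt.mpr ⟨by omega, by omega⟩)
      omega
    ext i; fin_cases i
    exacts [e0, e1]

theorem exists_sum_discrQuadForm_eq_sum_box_add {M : Matrix (Fin 2) (Fin 2) ℤ} (hM : M.IsSymm)
    (hdet : M.det ≠ 0) (heven : ∀ u, Even (u ⬝ᵥ M *ᵥ u)) {g r : ℕ} {q : ℤ} (hg : 0 < g)
    (hr : 0 < r) (hrange : Set.range M.mulVec = Set.range !![(g : ℤ), 0; q, r].mulVec) {d : ℕ}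
    (hd : 0 < d) {K : Finset (Fin 2 → ℤ)}
    (hK : ∀ v, ∃! k, k ∈ K ∧ ∃ u, v - k = (d : ℤ) • M *ᵥ u) :
    ∃ m : ℤ, ∑ k ∈ K, discrQuadForm M d k = ∑ k ∈ box (d * g) (d * r), discrQuadForm M d k + m := by
  set L := (((d : ℤ) • M).mulVecLin).range.toAddSubgroup
  have hL : ∀ z, z ∈ L ↔ ∃ u, z = (d : ℤ) • M *ᵥ u := fun z => by
    simp only [L, Submodule.mem_toAddSubgroup, LinearMap.mem_range, mulVecLin_apply, smul_mulVec]
    exact exists_congr fun u => eq_comm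
  have hLbox : ∀ z, z ∈ L ↔ z ∈ Set.range !![((d * g : ℕ) : ℤ), 0; d * q, (d * r : ℕ)].mulVec :=
    fun z => by
      rw [← range_smul_mulVec_lowerTriangular hrange d]
      simp only [L, Submodule.mem_toAddSubgroup, LinearMap.mem_range, mulVecLin_apply,
        Set.mem_range]
  obtain ⟨m, hm⟩ := AddSubgroup.sum_sub_sum_mem_of_existsUnique L (Int.castAddHom ℚ).range
    (f := discrQuadForm M d)
    (fun x y hy => by
      obtain ⟨u, rfl⟩ := (hL y).mp hy
      exact discrQuadForm_add_smul_mulVec_sub_mem hM hdet heven (by omega) x u)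
    (fun v => (existsUnique_congr fun k => and_congr_right' (hL (v - k))).mpr (hK v))
    (fun v => (existsUnique_congr fun k => and_congr_right' (hLbox (v - k))).mpr
      (existsUnique_mem_box_sub_mem_range (Nat.mul_pos hd hg) (Nat.mul_pos hd hr) _ v))
  exact ⟨m, by simp only [Int.coe_castAddHom] at hm; linarith⟩

theorem Finset.two_mul_sum_range_intCast (n : ℕ) :
    2 * ∑ i ∈ Finset.range n, (i : ℤ) = n * (n - 1) := by
  induction n with
  | zero => simp
  | succ n ih => rw [Finset.sum_range_succ, mul_add, ih]; push_cast; ring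

theorem Finset.six_mul_sum_range_intCast_sq (n : ℕ) :
    6 * ∑ i ∈ Finset.range n, (i : ℤ) ^ 2 = n * (n - 1) * (2 * n - 1) := by
  induction n with
  | zero => simp
  | succ n ih => rw [Finset.sum_range_succ, mul_add, ih]; push_cast; ring

theorem twelve_mul_sum_box (P R : ℕ) (a b c : ℤ) :
    12 * ∑ k ∈ box P R, (c * k 0 ^ 2 - b * k 0 * k 1 + a * k 1 ^ 2) =
      P * R * (2 * c * (P - 1) * (2 * P - 1) - 3 * b * (P - 1) * (R - 1)
        + 2 * a * (R - 1) * (2 * R - 1)) := by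
  have hinj : Set.InjOn (fun ij : ℕ × ℕ => ![(ij.1 : ℤ), ij.2])
      ↑(Finset.range P ×ˢ Finset.range R) := by
    rintro ⟨i, j⟩ - ⟨i', j'⟩ - h
    simpa using And.intro (congrFun h 0) (congrFun h 1)
  rw [box, Finset.sum_image hinj, Finset.sum_product]
  simp only [cons_val_zero, cons_val_one, Finset.sum_add_distrib, Finset.sum_sub_distrib,
    ← Finset.mul_sum, ← Finset.sum_mul, Finset.sum_const, Finset.card_range, nsmul_eq_mul]
  have h1P := Finset.two_mul_sum_range_intCast P
  have h1R := Finset.two_mul_sum_range_intCast R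
  have h2P := Finset.six_mul_sum_range_intCast_sq P
  have h2R := Finset.six_mul_sum_range_intCast_sq R
  linear_combination 2 * c * R * h2P - 3 * b * (2 * ∑ j ∈ Finset.range R, (j : ℤ)) * h1P
    - 3 * b * P * (P - 1) * h1R + 2 * a * P * h2R

theorem exists_eq_of_isSymm_of_even {M : Matrix (Fin 2) (Fin 2) ℤ} (hM : M.IsSymm)
    (heven : ∀ i, Even (M i i)) : ∃ a b c : ℤ, M = !![2 * a, b; b, 2 * c] := by
  obtain ⟨a, ha⟩ := heven 0
  obtain ⟨c, hc⟩ := heven 1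
  refine ⟨a, M 0 1, c, ?_⟩
  ext i j; fin_cases i <;> fin_cases j <;> simp [ha, hc, two_mul, ← hM.apply 0 1]

theorem even_dotProduct_mulVec_fin_two (a b c : ℤ) (u : Fin 2 → ℤ) :
    Even (u ⬝ᵥ !![2 * a, b; b, 2 * c] *ᵥ u) :=
  ⟨a * u 0 ^ 2 + b * u 0 * u 1 + c * u 1 ^ 2, by
    simp [mulVec, dotProduct, Fin.sum_univ_two]; ring⟩

theorem discrQuadForm_fin_two (a b c : ℤ) {d : ℤ} (hd : d ≠ 0)
    (hdet : (!![2 * a, b; b, 2 * c]).det ≠ 0) (k : Fin 2 → ℤ) :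
    discrQuadForm !![2 * a, b; b, 2 * c] d k =
      ((c * k 0 ^ 2 - b * k 0 * k 1 + a * k 1 ^ 2 : ℤ) : ℚ) /
        (d * (!![2 * a, b; b, 2 * c]).det) := by
  rw [det_fin_two_of] at hdet ⊢
  have hdet' : (2 * a * (2 * c) - b * b : ℚ) ≠ 0 := by exact_mod_cast hdet
  simp only [discrQuadForm, one_div, _root_.mul_inv_rev, dotProduct, mulVec, inv_def, det_fin_two,
    map_apply, of_apply, cons_val', cons_val_zero, cons_val_fin_one, cons_val_one,
    Ring.inverse_eq_inv', adjugate_fin_two, Matrix.smul_apply, smul_eq_mul, Fin.sum_univ_two,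
    mul_neg, neg_mul]
  push_cast
  field_simp
  ring

def boxCubic (a b c g r d : ℤ) : ℤ :=
  d * (2 * c * (d * g - 1) * (2 * d * g - 1) - 3 * b * (d * g - 1) * (d * r - 1)
    + 2 * a * (d * r - 1) * (2 * d * r - 1))

theorem twelve_mul_sum_box_discrQuadForm (a b c : ℤ) {g r : ℕ} (hg : 0 < g) (hr : 0 < r)
    {d : ℕ} (hd : 0 < d) (hgr : (g * r : ℤ) = (!![2 * a, b; b, 2 * c]).det) :
    12 * ∑ k ∈ box (d * g) (d * r), discrQuadForm !![2 * a, b; b, 2 * c] d k =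
      boxCubic a b c g r d := by
  have hdet : (!![2 * a, b; b, 2 * c]).det ≠ 0 := by rw [← hgr]; positivity
  simp_rw [discrQuadForm_fin_two a b c (by positivity : (d : ℤ) ≠ 0) hdet, ← Finset.sum_div,
    ← Int.cast_sum, ← hgr]
  rw [← mul_div_assoc, div_eq_iff (by positivity)]
  have h : 12 * ∑ k ∈ box (d * g) (d * r), (c * k 0 ^ 2 - b * k 0 * k 1 + a * k 1 ^ 2) =
      boxCubic a b c g r d * (d * (g * r)) := by
    rw [twelve_mul_sum_box]; unfold boxCubic; push_cast; ring
  exact_mod_cast h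

theorem Int.six_dvd_pred_mul_self_mul_succ (d : ℤ) : 6 ∣ (d - 1) * d * (d + 1) := by
  have key : ∀ x : ZMod 6, (x - 1) * x * (x + 1) = 0 := by decide
  exact (ZMod.intCast_zmod_eq_zero_iff_dvd _ 6).mp (by push_cast; exact key d)

theorem twelve_dvd_boxCubic_sub {a b c g r : ℤ} (hgr : g * r = 4 * a * c - b ^ 2) (d : ℤ) :
    12 ∣ boxCubic a b c g r d - d ^ 3 * boxCubic a b c g r 1 + 3 * (g * r) * (d ^ 3 - d) := by
  have hbgr : Even (b * (g + r)) := by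
    rcases Int.even_or_odd b with hb | hb
    · exact hb.mul_right _
    · have hodd : Odd (g * r) := by
        rw [hgr, show 4 * a * c - b ^ 2 = 2 * (2 * a * c) - b ^ 2 by ring]
        exact (even_two_mul _).sub_odd hb.pow
      obtain ⟨hg, hr⟩ := Int.odd_mul.mp hodd
      exact (hg.add_odd hr).mul_left b
  have hB : Even (2 * c * g - b * (g + r) + 2 * a * r) := by
    obtain ⟨t, ht⟩ := hbgr
    exact ⟨c * g - t + a * r, by linear_combination -ht⟩
  have hC : Even (2 * a + 2 * c - 3 * b - 3 * (g * r)) := by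
    obtain ⟨t, ht⟩ := Int.even_mul_pred_self b
    exact ⟨a + c - 6 * a * c + 3 * t, by linear_combination 3 * ht - 3 * hgr⟩
  have h1 : (12 : ℤ) ∣ 3 * (d * (d * (d - 1) * (2 * c * g - b * (g + r) + 2 * a * r))) :=
    dvd_trans (by norm_num) <| mul_dvd_mul_left 3 <| Dvd.dvd.mul_left
      (mul_dvd_mul (Int.even_mul_pred_self d).two_dvd hB.two_dvd) d
  have h2 : (12 : ℤ) ∣ (2 * a + 2 * c - 3 * b - 3 * (g * r)) * ((d - 1) * d * (d + 1)) :=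
    dvd_trans (by norm_num) <| mul_dvd_mul hC.two_dvd (Int.six_dvd_pred_mul_self_mul_succ d)
  have hfactor : boxCubic a b c g r d - d ^ 3 * boxCubic a b c g r 1 + 3 * (g * r) * (d ^ 3 - d) =
      3 * (d * (d * (d - 1) * (2 * c * g - b * (g + r) + 2 * a * r)))
        - (2 * a + 2 * c - 3 * b - 3 * (g * r)) * ((d - 1) * d * (d + 1)) := by
    unfold boxCubic; ring
  rw [hfactor]
  exact dvd_sub h1 h2

theorem stmt15 (M : Matrix (Fin 2) (Fin 2) ℤ) (hMsymm : M.IsSymm)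
    (hMpos : (M.map ((↑) : ℤ → ℝ)).PosDef)
    (hMeven : ∀ i, Even (M i i)) :
    ∃ α' : ℚ, (∃ m : ℤ, 12 * α' = (m : ℚ)) ∧
      ∀ d : ℤ, 1 ≤ d → ∀ K : Finset (Fin 2 → ℤ),
        (∀ v : Fin 2 → ℤ, ∃! k, k ∈ K ∧ ∃ u : Fin 2 → ℤ, v - k = d • M.mulVec u) →
        ∃ n : ℤ,
          (∑ k ∈ K, (1 / (2 * (d : ℚ))) *
              ((fun i => ((k i : ℚ))) ⬝ᵥ
                (M.map ((↑) : ℤ → ℚ))⁻¹.mulVec (fun i => ((k i : ℚ)))))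
            - α' * (d : ℚ) ^ 3 - ((M.det : ℚ) / 4) * (d : ℚ) = (n : ℚ) := by
  obtain ⟨a, b, c, rfl⟩ := exists_eq_of_isSymm_of_even hMsymm hMeven
  have hdet : 0 < (!![2 * a, b; b, 2 * c]).det := by
    have := hMpos.det_pos
    rwa [← Int.cast_det, Int.cast_pos] at this
  obtain ⟨g, r, q, hg, hr, hgr, hrange⟩ := exists_range_mulVec_eq_lowerTriangular hdet
  refine ⟨((boxCubic a b c g r 1 - 3 * (g * r) : ℤ) : ℚ) / 12, ⟨_, by ring⟩, fun d hd K hK => ?_⟩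
  lift d to ℕ using (by omega)
  obtain ⟨m, hm⟩ := exists_sum_discrQuadForm_eq_sum_box_add hMsymm hdet.ne'
    (even_dotProduct_mulVec_fin_two a b c) hg hr hrange (by omega) hK
  have hbox := twelve_mul_sum_box_discrQuadForm a b c hg hr (d := d) (by omega) hgr
  obtain ⟨n, hn⟩ := twelve_dvd_boxCubic_sub (a := a) (b := b) (c := c) (g := g) (r := r)
    (by rw [hgr, det_fin_two_of]; ring) d
  refine ⟨m + n, ?_⟩
  change ∑ k ∈ K, discrQuadForm !![2 * a, b; b, 2 * c] d k - _ - _ = _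
  have hn' := congrArg (Int.cast : ℤ → ℚ) hn
  rw [← hgr]
  push_cast at hn' ⊢
  linear_combination hm + hbox / 12 + hn' / 12
end
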